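/- arXiv:2306.10572 — 6 statements merged into one kernel-verified Lean document; each statement's English description precedes it below -/
import Mathlib

section
/- Let s_1, …, s_n (n ≥ 1) be strings over an alphabet Σ such that for all i ≠ j, s_i is not an infix of s_j. Then the minimum length of a common superstring of (s_1, …, s_n) exists and equals the minimum over all permutations π of {1, …, n} of (∑_{i=1}^n |s_i| − ∑_{j=1}^{n−1} ov(s_{π(j)}, s_{π(j+1)})); moreover this minimum is attained by the merge M(s_{π(1)}, …, s_{π(n)}) for a permutation π maximizing the total overlap ∑_{j=1}^{n−1} ov(s_{π(j)}, s_{π(j+1)}). -/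
/-- `ov u v` is the largest `r ≤ min |u| |v|` such that the suffix of `u` of length `r`
equals the prefix of `v` of length `r`. -/
def ov {σ : Type*} [DecidableEq σ] (u v : List σ) : ℕ :=
  Nat.findGreatest (fun r => u.drop (u.length - r) = v.take r) (min u.length v.length)

/-- Auxiliary function for the merge of a sequence of strings. -/
def mergeAux {σ : Type*} [DecidableEq σ] (acc prev : List σ) : List (List σ) → List σ
  | [] => acc
  | v :: rest => mergeAux (acc ++ v.drop (ov prev v)) v rest

/-- The merge `M(u₁, …, u_ℓ)` of a sequence of strings. -/
def mergeL {σ : Type*} [DecidableEq σ] : List (List σ) → List σ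
  | [] => []
  | u :: rest => mergeAux u u rest

/-- The total overlap `∑_{j=1}^{ℓ-1} ov(u_j, u_{j+1})` of consecutive strings in a list. -/
def totalOv {σ : Type*} [DecidableEq σ] (l : List (List σ)) : ℕ :=
  (List.zipWith ov l l.tail).sum

section Aux

variable {σ : Type*} [DecidableEq σ]

lemma ov_le_min (u v : List σ) : ov u v ≤ min u.length v.length :=
  Nat.findGreatest_le _

lemma ov_spec (u v : List σ) : u.drop (u.length - ov u v) = v.take (ov u v) :=
  Nat.findGreatest_spec (P := fun r => u.drop (u.length - r) = v.take r) (m := 0)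
    (Nat.zero_le _) (by simp)

lemma le_ov {u v : List σ} {r : ℕ} (h1 : r ≤ min u.length v.length)
    (h2 : u.drop (u.length - r) = v.take r) : r ≤ ov u v :=
  Nat.le_findGreatest h1 h2

lemma totalOv_cons_cons (u v : List σ) (rest : List (List σ)) :
    totalOv (u :: v :: rest) = ov u v + totalOv (v :: rest) := by
  simp [totalOv]

lemma prefix_mergeAux (acc prev : List σ) (rest : List (List σ)) :
    acc <+: mergeAux acc prev rest := by
  induction rest generalizing acc prev with
  | nil => exact List.prefix_refl _
  | cons v rest ih =>
    rw [mergeAux]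
    exact (List.prefix_append _ _).trans (ih _ _)

lemma infix_mergeAux (acc prev : List σ) (rest : List (List σ)) (h : prev <:+ acc) :
    ∀ u ∈ prev :: rest, u <:+: mergeAux acc prev rest := by
  induction rest generalizing acc prev with
  | nil =>
    intro u hu
    simp only [List.mem_singleton] at hu
    subst hu
    exact h.isInfix
  | cons v rest ih =>
    have hsuf : v <:+ acc ++ v.drop (ov prev v) := by
      have htake : v.take (ov prev v) <:+ acc :=
        (ov_spec prev v ▸ List.drop_suffix _ _).trans h
      obtain ⟨w, hw⟩ := htake
      exact ⟨w, by rw [← hw, List.append_assoc, List.take_append_drop]⟩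
    intro u hu
    rw [mergeAux]
    rcases List.mem_cons.1 hu with rfl | hu'
    · exact (h.isInfix).trans (((List.prefix_append _ _).trans (prefix_mergeAux _ _ _)).isInfix)
    · exact ih _ _ hsuf u hu'

lemma length_mergeAux (acc prev : List σ) (rest : List (List σ)) :
    (mergeAux acc prev rest).length + totalOv (prev :: rest)
      = acc.length + (rest.map List.length).sum := by
  induction rest generalizing acc prev with
  | nil => simp [mergeAux, totalOv]
  | cons v rest ih =>
    have h1 := ih (acc ++ v.drop (ov prev v)) v
    have h2 : ov prev v ≤ v.length := (ov_le_min prev v).trans (min_le_right _ _)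
    rw [mergeAux] at *
    rw [totalOv_cons_cons]
    simp only [List.length_append, List.length_drop, List.map_cons, List.sum_cons] at h1 ⊢
    omega

lemma infix_of_occ {t u : List σ} {p : ℕ} (h : u = (t.drop p).take u.length) : u <:+: t :=
  h ▸ ((List.take_prefix _ _).isInfix.trans (List.drop_suffix _ _).isInfix)

/-- key adjacency lemma: if `u` occurs at position `pu ≤ pv` where `v` occurs,
and `v` is not an infix of `u`, then `|u| + pu ≤ pv + ov u v`. -/
lemma adj_ov {t u v : List σ} {pu pv : ℕ}
    (hu : u = (t.drop pu).take u.length) (hul : pu + u.length ≤ t.length)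
    (hv : v = (t.drop pv).take v.length) (hvl : pv + v.length ≤ t.length)
    (hle : pu ≤ pv) (hni : ¬ v <:+: u) :
    u.length + pu ≤ pv + ov u v := by
  by_cases hcase : pu + u.length ≤ pv
  · omega
  push_neg at hcase
  -- drop (pv - pu) u = take (u.length - (pv - pu)) (t.drop pv)
  have hdu : u.drop (pv - pu) = (t.drop pv).take (u.length - (pv - pu)) := by
    conv_lhs => rw [hu]
    rw [List.drop_take, List.drop_drop, Nat.add_sub_cancel' hle]
  -- first: pu + |u| ≤ pv + |v|, else v would be an infix of u
  have hend : pu + u.length ≤ pv + v.length := by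
    by_contra hend
    push_neg at hend
    apply hni
    have hlen : v.length ≤ u.length - (pv - pu) := by omega
    have : v = (u.drop (pv - pu)).take v.length := by
      conv_lhs => rw [hv]
      rw [hdu, List.take_take, min_eq_left hlen]
    exact this ▸ ((List.take_prefix _ _).isInfix.trans (List.drop_suffix _ _).isInfix)
  set r := pu + u.length - pv with hr
  have hrmin : r ≤ min u.length v.length := by omega
  have hmatch : u.drop (u.length - r) = v.take r := by
    have h1 : u.length - r = pv - pu := by omega
    have h2 : r ≤ v.length := by omega
    have h3 : u.length - (pv - pu) = r := by omega
    rw [h1, hdu, h3]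
    conv_rhs => rw [hv]
    rw [List.take_take, min_eq_left h2]
  have := le_ov hrmin hmatch
  omega

/-- The telescoping lower bound. -/
lemma key_bound (t : List σ) (f : List σ → ℕ) (u : List σ) (rest : List (List σ))
    (hocc : ∀ w ∈ u :: rest, w = (t.drop (f w)).take w.length ∧ f w + w.length ≤ t.length)
    (hsort : (u :: rest).Pairwise (fun a b => f a ≤ f b))
    (hni : (u :: rest).Pairwise (fun a b => ¬ b <:+: a)) :
    ((u :: rest).map List.length).sum + f u ≤ t.length + totalOv (u :: rest) := by
  induction rest generalizing u with
  | nil =>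
    obtain ⟨-, h2⟩ := hocc u (by simp)
    have h3 : totalOv [u] = 0 := by simp [totalOv]
    simp only [List.map_cons, List.map_nil, List.sum_cons, List.sum_nil, add_zero, h3]
    omega
  | cons v rest ih =>
    have ihv := ih v (fun w hw => hocc w (List.mem_cons_of_mem _ hw)) hsort.tail hni.tail
    obtain ⟨hu1, hu2⟩ := hocc u (by simp)
    obtain ⟨hv1, hv2⟩ := hocc v (by simp)
    have hadj : u.length + f u ≤ f v + ov u v :=
      adj_ov hu1 (by omega) hv1 (by omega)
        (List.rel_of_pairwise_cons hsort (by simp))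
        (List.rel_of_pairwise_cons hni (by simp))
    rw [totalOv_cons_cons]
    simp only [List.map_cons, List.sum_cons] at ihv ⊢
    omega

lemma occ_repr {t u : List σ} (h : u <:+: t) :
    ∃ p : ℕ, u = (t.drop p).take u.length ∧ p + u.length ≤ t.length := by
  obtain ⟨x, y, hxy⟩ := h
  refine ⟨x.length, ?_, ?_⟩
  · rw [← hxy, List.append_assoc, List.drop_left, List.take_left]
  · rw [← hxy]
    simp only [List.length_append]
    omega

end Aux

theorem stmt0 {σ : Type*} [DecidableEq σ] (l : List (List σ)) (hl : l ≠ [])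
    (hni : l.Pairwise (fun a b => ¬ a <:+: b ∧ ¬ b <:+: a)) :
    ∃ l' : List (List σ), l'.Perm l ∧
      (∀ l'' : List (List σ), l''.Perm l → totalOv l'' ≤ totalOv l') ∧
      IsLeast {L : ℕ | ∃ t : List σ, (∀ u ∈ l, u <:+: t) ∧ t.length = L}
        ((l.map List.length).sum - totalOv l') ∧
      (∀ u ∈ l, u <:+: mergeL l') ∧
      (mergeL l').length = (l.map List.length).sum - totalOv l' := by
  classical
  -- choose a permutation maximizing totalOv
  obtain ⟨l', hl'⟩ : ∃ l', l' ∈ List.argmax totalOv l.permutations := by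
    rcases h : List.argmax totalOv l.permutations with - | l'
    · exact absurd (List.argmax_eq_none.1 h)
        (List.ne_nil_of_mem (List.mem_permutations.2 (List.Perm.refl l)))
    · exact ⟨l', by simp [h]⟩
  have hperm : l'.Perm l := List.mem_permutations.1 (List.argmax_mem hl')
  have hmax : ∀ l'' : List (List σ), l''.Perm l → totalOv l'' ≤ totalOv l' :=
    fun l'' h'' => List.le_of_mem_argmax (List.mem_permutations.2 h'') hl'
  have hsum : ((l'.map List.length).sum) = (l.map List.length).sum :=
    (hperm.map List.length).sum_eq
  -- merge properties
  obtain ⟨u0, rest0, rfl⟩ : ∃ u0 rest0, l' = u0 :: rest0 := by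
    cases l' with
    | nil => exact absurd hperm.symm.eq_nil (by simpa using hl)
    | cons a b => exact ⟨a, b, rfl⟩
  have hmerge_inf : ∀ u ∈ l, u <:+: mergeL (u0 :: rest0) := by
    intro u hu
    exact infix_mergeAux u0 u0 rest0 (List.suffix_refl _) u (hperm.mem_iff.2 hu)
  have hmerge_len : (mergeL (u0 :: rest0)).length
      = (l.map List.length).sum - totalOv (u0 :: rest0) := by
    have := length_mergeAux u0 u0 rest0
    rw [mergeL] at *
    simp only [List.map_cons, List.sum_cons] at hsum
    omega
  refine ⟨u0 :: rest0, hperm, hmax, ⟨⟨mergeL (u0 :: rest0), hmerge_inf, hmerge_len⟩, ?_⟩,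
    hmerge_inf, hmerge_len⟩
  -- lower bound
  rintro L ⟨t, ht, rfl⟩
  -- position function
  set f : List σ → ℕ := fun u =>
    if h : u <:+: t then (occ_repr h).choose else 0 with hf
  have hoccf : ∀ u ∈ l, u = (t.drop (f u)).take u.length ∧ f u + u.length ≤ t.length := by
    intro u hu
    have h : u <:+: t := ht u hu
    rw [hf]
    simp only [dif_pos h]
    exact (occ_repr h).choose_spec
  -- sort l by f
  haveI : IsTotal (List σ) (fun a b => f a ≤ f b) := ⟨fun a b => le_total _ _⟩
  haveI : IsTrans (List σ) (fun a b => f a ≤ f b) := ⟨fun a b c => le_trans⟩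
  set m := List.insertionSort (fun a b => f a ≤ f b) l with hm
  have hmperm : m.Perm l := List.perm_insertionSort _ l
  have hmsort : m.Pairwise (fun a b => f a ≤ f b) := List.pairwise_insertionSort _ l
  have hmni : m.Pairwise (fun a b => ¬ b <:+: a) := by
    have : m.Pairwise (fun a b : List σ => ¬ a <:+: b ∧ ¬ b <:+: a) :=
      (hmperm.pairwise_iff (fun h => ⟨h.2, h.1⟩)).2 hni
    exact this.imp (fun h => h.2)
  obtain ⟨v0, mrest, hmeq⟩ : ∃ v0 mrest, m = v0 :: mrest := by
    cases hcm : m with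
    | nil => exact absurd (hcm ▸ hmperm).symm.eq_nil (by simpa using hl)
    | cons a b => exact ⟨a, b, rfl⟩
  have hkey := key_bound t f v0 mrest
    (fun w hw => hoccf w (hmperm.mem_iff.1 (hmeq ▸ hw)))
    (hmeq ▸ hmsort) (hmeq ▸ hmni)
  have hsum2 : ((v0 :: mrest).map List.length).sum = (l.map List.length).sum :=
    ((hmeq ▸ hmperm).map List.length).sum_eq
  have hmax2 : totalOv (v0 :: mrest) ≤ totalOv (u0 :: rest0) := hmax _ (hmeq ▸ hmperm)
  omega
end

section
/- Let s_1, …, s_n (n ≥ 1) be strings over an alphabet Σ such that for all i ≠ j, s_i is not an infix of s_j. If t is a common superstring of (s_1, …, s_n), then there exists a permutation π of {1, …, n} such that |t| ≥ ∑_{i=1}^n |s_i| − ∑_{j=1}^{n−1} ov(s_{π(j)}, s_{π(j+1)}). -/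
/-- Occurrence of `u` in `t` at position `i`. -/
def Occ {σ : Type*} (t u : List σ) (i : ℕ) : Prop :=
  (t.drop i).take u.length = u ∧ i + u.length ≤ t.length

lemma occ_of_infix {σ : Type*} {t u : List σ} (h : u <:+: t) : ∃ i, Occ t u i := by
  obtain ⟨s₁, s₂, rfl⟩ := h
  refine ⟨s₁.length, ?_, ?_⟩
  · rw [List.append_assoc, List.drop_left, List.take_left]
  · simp only [List.length_append]; omega

/-- If two occurrences start in order but the second one ends no later, the second string
is an infix of the first. -/
lemma occ_end_le {σ : Type*} {t u v : List σ} {i j : ℕ}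
    (hu : Occ t u i) (hv : Occ t v j) (hij : i ≤ j) (hnd : ¬ v <:+: u) :
    i + u.length ≤ j + v.length := by
  by_contra hcon
  push_neg at hcon
  apply hnd
  have h1 : u.drop (j - i) = (t.drop j).take (u.length - (j - i)) := by
    conv_lhs => rw [← hu.1]
    rw [List.drop_take, List.drop_drop, show i + (j - i) = j from by omega]
  have h2 : v = (u.drop (j - i)).take v.length := by
    rw [h1, List.take_take, min_eq_left (by omega), hv.1]
  calc v <:+: u.drop (j - i) := by rw [h2]; exact (List.take_prefix _ _).isInfix
    _ <:+: u := (List.drop_suffix _ _).isInfix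

/-- Overlap lower bound from overlapping occurrences. -/
lemma ov_ge_of_occ {σ : Type*} [DecidableEq σ] {t u v : List σ} {i j : ℕ}
    (hu : Occ t u i) (hv : Occ t v j) (hij : i ≤ j) (hj : j ≤ i + u.length)
    (he : i + u.length ≤ j + v.length) :
    i + u.length - j ≤ ov u v := by
  apply Nat.le_findGreatest
  · exact le_min (by omega) (by omega)
  · have h1 : u.drop (u.length - (i + u.length - j)) = (t.drop j).take (i + u.length - j) := by
      have : u.length - (i + u.length - j) = j - i := by omega
      rw [this]
      conv_lhs => rw [← hu.1]
      rw [List.drop_take, List.drop_drop, show i + (j - i) = j from by omega]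
      congr 1
      omega
    have h2 : v.take (i + u.length - j) = (t.drop j).take (i + u.length - j) := by
      conv_lhs => rw [← hv.1]
      rw [List.take_take, min_eq_left (by omega)]
    rw [h1, h2]

lemma totalOv_cons {σ : Type*} [DecidableEq σ] (u v : List σ) (rest : List (List σ)) :
    totalOv (u :: v :: rest) = ov u v + totalOv (v :: rest) := by
  simp [totalOv]

/-- Telescoping bound along a chain of ordered occurrences. -/
lemma chain_bound {σ : Type*} [DecidableEq σ] (t : List σ) (s : List σ → ℕ) :
    ∀ (rest : List (List σ)) (w : List σ),
    (∀ u ∈ w :: rest, Occ t u (s u)) →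
    (w :: rest).Chain' (fun u v => s u ≤ s v ∧ s u + u.length ≤ s v + v.length) →
    (((w :: rest).map List.length).sum : ℤ) - totalOv (w :: rest) ≤ (t.length : ℤ) - s w
  | [], w, hocc, _ => by
    have := (hocc w (by simp)).2
    simp [totalOv]
    omega
  | v :: rest, w, hocc, hch => by
    have hR : s w ≤ s v ∧ s w + w.length ≤ s v + v.length := List.isChain_cons_cons.1 hch |>.1
    have ih := chain_bound t s rest v (fun u hu => hocc u (List.mem_cons_of_mem _ hu))
      (List.isChain_cons_cons.1 hch).2
    have hov : (s w : ℤ) + w.length ≤ s v + ov w v := by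
      rcases le_or_gt (s w + w.length) (s v) with h | h
      · have : (0 : ℤ) ≤ ov w v := by positivity
        omega
      · have := ov_ge_of_occ (hocc w (by simp)) (hocc v (by simp)) hR.1 (by omega) hR.2
        omega
    rw [totalOv_cons]
    simp only [List.map_cons, List.sum_cons] at ih ⊢
    push_cast at ih ⊢
    omega

theorem stmt1 {σ : Type*} [DecidableEq σ] (l : List (List σ)) (hl : l ≠ [])
    (hni : l.Pairwise (fun a b => ¬ a <:+: b ∧ ¬ b <:+: a))
    (t : List σ) (ht : ∀ u ∈ l, u <:+: t) :
    ∃ l' : List (List σ), l'.Perm l ∧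
      ((l.map List.length).sum : ℤ) - (totalOv l' : ℤ) ≤ (t.length : ℤ) := by
  classical
  -- choose a start for each string
  have hch : ∀ u : List σ, ∃ i, u ∈ l → Occ t u i := by
    intro u
    by_cases h : u ∈ l
    · obtain ⟨i, hi⟩ := occ_of_infix (ht u h)
      exact ⟨i, fun _ => hi⟩
    · exact ⟨0, fun h' => absurd h' h⟩
  choose s hs using hch
  set l' := l.mergeSort (fun u v => decide (s u ≤ s v)) with hl'
  have hperm : l'.Perm l := List.mergeSort_perm l _
  refine ⟨l', hperm, ?_⟩
  have hsorted : l'.Pairwise (fun u v => s u ≤ s v) := by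
    have := List.pairwise_mergeSort (le := fun u v => decide (s u ≤ s v))
      (fun a b c h₁ h₂ => by simp_all; omega)
      (fun a b => by simp; omega) l
    exact this.imp (by simp_all)
  have hni' : l'.Pairwise (fun a b => ¬ a <:+: b ∧ ¬ b <:+: a) :=
    hperm.symm.pairwise hni (fun h => ⟨h.2, h.1⟩)
  have hR : l'.Chain' (fun u v => s u ≤ s v ∧ s u + u.length ≤ s v + v.length) := by
    apply List.Pairwise.isChain
    refine (hsorted.and hni').imp_of_mem ?_
    intro a b ha hb hab
    refine ⟨hab.1, occ_end_le (hs a (hperm.mem_iff.1 ha)) (hs b (hperm.mem_iff.1 hb))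
      hab.1 hab.2.2⟩
  have hne : l' ≠ [] := fun h => hl ((h ▸ hperm.symm).eq_nil)
  obtain ⟨w, rest, hwr⟩ := List.exists_cons_of_ne_nil hne
  have hb := chain_bound t s rest w (fun u hu => hs u (hperm.mem_iff.1 (hwr ▸ hu))) (hwr ▸ hR)
  have hsum : ((l.map List.length).sum) = (((w :: rest).map List.length).sum) := by
    rw [← hwr]; exact ((hperm.map List.length).sum_eq).symm
  rw [hwr, hsum]
  have : (0 : ℤ) ≤ (s w : ℤ) := by positivity
  omega
end

section
/- For any strings a, u, b over an alphabet Σ, the overlaps satisfy ov(a,u) + ov(u,b) ≤ |u| + ov(a,b). -/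
theorem stmt5 {σ : Type*} [DecidableEq σ] (a u b : List σ) :
    ov a u + ov u b ≤ u.length + ov a b := by
  obtain ⟨r, hrdef⟩ : ∃ r, ov a u = r := ⟨_, rfl⟩
  obtain ⟨s, hsdef⟩ : ∃ s, ov u b = s := ⟨_, rfl⟩
  have hrle : r ≤ min a.length u.length := hrdef ▸ Nat.findGreatest_le _
  have hsle : s ≤ min u.length b.length := hsdef ▸ Nat.findGreatest_le _
  by_cases hc : r + s ≤ u.length
  · omega
  · have hr : a.drop (a.length - r) = u.take r := by
      have := Nat.findGreatest_spec (P := fun r => a.drop (a.length - r) = u.take r)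
        (Nat.zero_le (min a.length u.length)) (by simp)
      rw [← hrdef]; simpa [ov] using this
    have hs : u.drop (u.length - s) = b.take s := by
      have := Nat.findGreatest_spec (P := fun r => u.drop (u.length - r) = b.take r)
        (Nat.zero_le (min u.length b.length)) (by simp)
      rw [← hsdef]; simpa [ov] using this
    obtain ⟨t, htdef⟩ : ∃ t, r + s - u.length = t := ⟨_, rfl⟩
    have htr : t ≤ r := by omega
    have hts : t ≤ s := by omega
    have hP : a.drop (a.length - t) = b.take t := by
      have h1 : a.drop (a.length - t) = (a.drop (a.length - r)).drop (r - t) := by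
        rw [List.drop_drop]
        congr 1
        omega
      have h2 : b.take t = (b.take s).take t := by
        rw [List.take_take, min_eq_left hts]
      rw [h1, hr, h2, ← hs, List.drop_take]
      congr 2 <;> omega
    have : t ≤ ov a b :=
      Nat.le_findGreatest (by omega) hP
    omega
end

section
/- Let V be a finite set and w : V × V → ℕ. For every subset Y ⊆ V, every v, u ∈ Y, and every integer k with 1 ≤ k < |Y|, the maximum-weight Hamiltonian-path function satisfies L(Y, v, u) = max over all Y' ⊆ Y with |Y'| = k, v ∈ Y', u ∉ Y', and over all y ∈ Y', of L(Y', v, y) + L((Y ∖ Y') ∪ {y}, y, u), where the maximum over an empty collection is ⊥. -/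
/-- The weight of a path `P = (v₁, …, v_ℓ)`, i.e. `∑_{j=2}^{ℓ} w(v_{j-1}, v_j)`. -/
def pathWeight {V : Type*} (w : V → V → ℕ) (P : List V) : ℕ :=
  (List.zipWith w P P.tail).sum

/-- Duplicate-free lists whose set of entries is exactly `Y`, starting at `v` and
ending at `u`. -/
noncomputable def hamPaths {V : Type*} [DecidableEq V] (Y : Finset V) (v u : V) : Finset (List V) :=
  Y.toList.permutations.toFinset.filter
    (fun P => P.head? = some v ∧ P.getLast? = some u)

/-- `Lfun w Y v u` is the maximal weight of a duplicate-free path that visits exactly the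
vertices of `Y`, starts at `v` and ends at `u`; it is `⊥` if no such path exists. -/
noncomputable def Lfun {V : Type*} [DecidableEq V] (w : V → V → ℕ) (Y : Finset V) (v u : V) : WithBot ℕ :=
  (hamPaths Y v u).sup (fun P => ((pathWeight w P : ℕ) : WithBot ℕ))


/-!
Cutting a Hamiltonian path of `Y` from `v` to `u` at its `k`-th vertex `y` yields a path through
the set `Y'` of its first `k` vertices from `v` to `y` and a path through `(Y \ Y') ∪ {y}` from `y`
to `u`, whose weights add up to the weight of the whole path; conversely, any two such paths glue
at `y` to a Hamiltonian path of `Y`. The first observation gives `≤`, the second `≥`.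
-/

theorem pathWeight_cons_cons {V : Type*} (w : V → V → ℕ) (a b : V) (l : List V) :
    pathWeight w (a :: b :: l) = w a b + pathWeight w (b :: l) := by
  simp [pathWeight]

theorem pathWeight_append_cons {V : Type*} (w : V → V → ℕ) (A : List V) (y : V) (T : List V) :
    pathWeight w (A ++ y :: T) = pathWeight w (A ++ [y]) + pathWeight w (y :: T) := by
  induction A with
  | nil => simp [pathWeight]
  | cons a A ih =>
    cases A with
    | nil => simp [pathWeight]
    | cons b A =>
      simp only [List.cons_append, pathWeight_cons_cons] at ih ⊢
      omega

theorem List.exists_eq_append_cons_of_lt_length {α : Type*} {P : List α} {k : ℕ}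
    (hk : k < P.length) : ∃ A y T, P = A ++ y :: T ∧ A.length = k :=
  ⟨P.take k, P[k], P.drop (k + 1), by simp [List.getElem_cons_drop], by simp; omega⟩

theorem Finset.sup_add_sup_le {ι κ M : Type*} [LinearOrder M] [Add M] {s : Finset ι}
    {t : Finset κ} {f : ι → WithBot M} {g : κ → WithBot M} {c : WithBot M}
    (h : ∀ i ∈ s, ∀ j ∈ t, f i + g j ≤ c) : s.sup f + t.sup g ≤ c := by
  rcases s.eq_empty_or_nonempty with rfl | hs
  · simp
  rcases t.eq_empty_or_nonempty with rfl | ht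
  · simp
  obtain ⟨i, hi, hfi⟩ := s.exists_mem_eq_sup hs f
  obtain ⟨j, hj, hgj⟩ := t.exists_mem_eq_sup ht g
  rw [hfi, hgj]
  exact h i hi j hj

section HamPaths

variable {V : Type*} [DecidableEq V] {Y Y' : Finset V} {v u y : V}

theorem mem_hamPaths {P : List V} :
    P ∈ hamPaths Y v u ↔
      P.Nodup ∧ P.toFinset = Y ∧ P.head? = some v ∧ P.getLast? = some u := by
  simp only [hamPaths, Finset.mem_filter, List.mem_toFinset, List.mem_permutations]
  constructor
  · rintro ⟨hp, h1, h2⟩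
    refine ⟨hp.nodup_iff.mpr Y.nodup_toList, ?_, h1, h2⟩
    rw [List.toFinset_eq_of_perm _ _ hp, Finset.toList_toFinset]
  · rintro ⟨hnd, hfs, h1, h2⟩
    refine ⟨List.perm_of_nodup_nodup_toFinset_eq hnd Y.nodup_toList ?_, h1, h2⟩
    rw [hfs, Finset.toList_toFinset]

theorem append_cons_mem_hamPaths {A T : List V} (hY' : Y' ⊆ Y)
    (hA : A ++ [y] ∈ hamPaths Y' v y) (hT : y :: T ∈ hamPaths (Y \ Y' ∪ {y}) y u) :
    A ++ y :: T ∈ hamPaths Y v u := by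
  obtain ⟨hndA, hfsA, hheadA, -⟩ := mem_hamPaths.mp hA
  obtain ⟨hndT, hfsT, -, hlastT⟩ := mem_hamPaths.mp hT
  have hyY' : y ∈ Y' := hfsA ▸ List.mem_toFinset.mpr (by simp)
  have hTY : T.toFinset = Y \ Y' := by
    ext x
    have hx := congrArg (x ∈ ·) hfsT
    by_cases hxy : x = y
    · subst hxy
      simp [(List.nodup_cons.mp hndT).1, hyY']
    · simpa [hxy] using hx
  have hsplit : A ++ y :: T = (A ++ [y]) ++ T := by simp
  refine mem_hamPaths.mpr ⟨?_, ?_, ?_, ?_⟩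
  · rw [hsplit]
    refine hndA.append (List.nodup_cons.mp hndT).2 fun a ha hb => ?_
    have h₁ : a ∈ Y' := hfsA ▸ List.mem_toFinset.mpr ha
    have h₂ : a ∈ Y \ Y' := hTY ▸ List.mem_toFinset.mpr hb
    exact (Finset.mem_sdiff.mp h₂).2 h₁
  · rw [hsplit, List.toFinset_append, hfsA, hTY, Finset.union_sdiff_of_subset hY']
  · simpa using hheadA
  · rwa [List.getLast?_append_of_ne_nil _ (List.cons_ne_nil y T)]

theorem append_singleton_mem_hamPaths {A T : List V} (hP : A ++ y :: T ∈ hamPaths Y v u) :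
    A ++ [y] ∈ hamPaths (A ++ [y]).toFinset v y := by
  obtain ⟨hnd, -, hhead, -⟩ := mem_hamPaths.mp hP
  refine mem_hamPaths.mpr ⟨?_, rfl, by simpa using hhead, by simp⟩
  exact hnd.sublist (by simp)

theorem cons_mem_hamPaths {A T : List V} (hP : A ++ y :: T ∈ hamPaths Y v u) :
    y :: T ∈ hamPaths (Y \ (A ++ [y]).toFinset ∪ {y}) y u := by
  obtain ⟨hnd, hfs, -, hlast⟩ := mem_hamPaths.mp hP
  refine mem_hamPaths.mpr ⟨hnd.sublist (by simp), ?_, rfl, ?_⟩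
  · have hdisj : ∀ a ∈ A, a ∉ y :: T := fun a ha hb =>
      (List.nodup_append.mp hnd).2.2 a ha a hb rfl
    subst hfs
    ext x
    simp only [List.mem_toFinset, Finset.mem_union, Finset.mem_sdiff, Finset.mem_singleton,
      List.mem_append, List.mem_cons, List.not_mem_nil, or_false]
    have := hdisj x
    grind
  · rwa [List.getLast?_append_of_ne_nil _ (List.cons_ne_nil y T)] at hlast

theorem toFinset_append_singleton_mem_filter {A T : List V}
    (hP : A ++ y :: T ∈ hamPaths Y v u) (hT : T ≠ []) :
    (A ++ [y]).toFinset ∈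
      Y.powerset.filter (fun Y' => Y'.card = A.length + 1 ∧ v ∈ Y' ∧ u ∉ Y') := by
  obtain ⟨hnd, hfs, -, hlast⟩ := mem_hamPaths.mp hP
  obtain ⟨-, -, hhead, -⟩ := mem_hamPaths.mp (append_singleton_mem_hamPaths hP)
  rw [show A ++ y :: T = (A ++ [y]) ++ T by simp] at hnd hfs hlast
  rw [List.getLast?_append_of_ne_nil _ hT] at hlast
  refine Finset.mem_filter.mpr ⟨Finset.mem_powerset.mpr ?_, ?_, ?_, ?_⟩
  · rw [← hfs, List.toFinset_append (l := A ++ [y])]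
    exact Finset.subset_union_left
  · rw [List.toFinset_card_of_nodup (hnd.sublist (List.sublist_append_left _ _))]
    simp
  · exact List.mem_toFinset.mpr (List.mem_of_mem_head? hhead)
  · exact fun hu => List.disjoint_of_nodup_append hnd (List.mem_toFinset.mp hu)
      (List.mem_of_getLast? hlast)

end HamPaths

section Lfun

variable {V : Type*} [DecidableEq V] (w : V → V → ℕ) {Y Y' : Finset V} {v u y : V}

theorem Lfun_add_le (hY' : Y' ⊆ Y) :
    Lfun w Y' v y + Lfun w (Y \ Y' ∪ {y}) y u ≤ Lfun w Y v u := by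
  refine Finset.sup_add_sup_le fun P₁ h₁ P₂ h₂ => ?_
  obtain ⟨A, rfl⟩ := List.getLast?_eq_some_iff.mp (mem_hamPaths.mp h₁).2.2.2
  obtain ⟨T, rfl⟩ := List.head?_eq_some_iff.mp (mem_hamPaths.mp h₂).2.2.1
  calc ((pathWeight w (A ++ [y]) : WithBot ℕ)) + (pathWeight w (y :: T) : WithBot ℕ)
      = (pathWeight w (A ++ y :: T) : WithBot ℕ) := by
        rw [pathWeight_append_cons w A y T, Nat.cast_add]
    _ ≤ Lfun w Y v u := Finset.le_sup (f := fun P => ((pathWeight w P : ℕ) : WithBot ℕ))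
        (append_cons_mem_hamPaths hY' h₁ h₂)

theorem pathWeight_le_sup_Lfun_add {P : List V} (hP : P ∈ hamPaths Y v u) {k : ℕ}
    (hk1 : 1 ≤ k) (hk2 : k < Y.card) :
    (pathWeight w P : WithBot ℕ) ≤
      (Y.powerset.filter (fun Y' => Y'.card = k ∧ v ∈ Y' ∧ u ∉ Y')).sup
        (fun Y' => Y'.sup (fun y => Lfun w Y' v y + Lfun w ((Y \ Y') ∪ {y}) y u)) := by
  obtain ⟨hnd, hfs, -, -⟩ := mem_hamPaths.mp hP
  have hlen : P.length = Y.card := by rw [← hfs, List.toFinset_card_of_nodup hnd]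
  obtain ⟨A, y, T, rfl, hA⟩ :=
    List.exists_eq_append_cons_of_lt_length (P := P) (k := k - 1) (by omega)
  have hT : T ≠ [] := by rintro rfl; simp at hlen; omega
  have h₁ := append_singleton_mem_hamPaths hP
  have h₂ := cons_mem_hamPaths hP
  set Y' := (A ++ [y]).toFinset
  have hY' : Y' ∈ Y.powerset.filter (fun Y' => Y'.card = k ∧ v ∈ Y' ∧ u ∉ Y') := by
    rw [show k = A.length + 1 by omega]
    exact toFinset_append_singleton_mem_filter hP hT
  have hy : y ∈ Y' := by simp [Y']
  calc (pathWeight w (A ++ y :: T) : WithBot ℕ)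
      = (pathWeight w (A ++ [y]) : WithBot ℕ) + (pathWeight w (y :: T) : WithBot ℕ) := by
        rw [pathWeight_append_cons w A y T, Nat.cast_add]
    _ ≤ Lfun w Y' v y + Lfun w (Y \ Y' ∪ {y}) y u := add_le_add
        (Finset.le_sup (f := fun P => ((pathWeight w P : ℕ) : WithBot ℕ)) h₁)
        (Finset.le_sup (f := fun P => ((pathWeight w P : ℕ) : WithBot ℕ)) h₂)
    _ ≤ _ := Finset.le_sup_of_le
        (f := fun Y' => Y'.sup fun y => Lfun w Y' v y + Lfun w (Y \ Y' ∪ {y}) y u) hY'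
        (Finset.le_sup (f := fun y => Lfun w Y' v y + Lfun w (Y \ Y' ∪ {y}) y u) hy)

end Lfun

theorem stmt7_general {V : Type*} [DecidableEq V] (w : V → V → ℕ) (Y : Finset V) (v u : V)
    (k : ℕ) (hk1 : 1 ≤ k) (hk2 : k < Y.card) :
    Lfun w Y v u =
      (Y.powerset.filter (fun Y' => Y'.card = k ∧ v ∈ Y' ∧ u ∉ Y')).sup
        (fun Y' => Y'.sup (fun y => Lfun w Y' v y + Lfun w ((Y \ Y') ∪ {y}) y u)) :=
  le_antisymm (Finset.sup_le fun _ hP => pathWeight_le_sup_Lfun_add w hP hk1 hk2)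
    (Finset.sup_le fun _ hY' => Finset.sup_le fun _ _ =>
      Lfun_add_le w (Finset.mem_powerset.mp (Finset.mem_filter.mp hY').1))

theorem stmt7 {V : Type*} [DecidableEq V] (w : V → V → ℕ) (Y : Finset V) (v u : V)
    (hv : v ∈ Y) (hu : u ∈ Y) (k : ℕ) (hk1 : 1 ≤ k) (hk2 : k < Y.card) :
    Lfun w Y v u =
      (Y.powerset.filter (fun Y' => Y'.card = k ∧ v ∈ Y' ∧ u ∉ Y')).sup
        (fun Y' => Y'.sup (fun y => Lfun w Y' v y + Lfun w ((Y \ Y') ∪ {y}) y u)) :=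
  stmt7_general w Y v u k hk1 hk2
end

section
/- Let V be a finite set and w : V × V → ℕ. For every subset Y ⊆ V and every v, u ∈ Y with v ≠ u, the maximum-weight Hamiltonian-path function satisfies L(Y, v, u) = max_{y ∈ Y ∖ {u}} ( L(Y ∖ {u}, v, y) + w(y, u) ). -/
section HamiltonianPaths

variable {V : Type*}

lemma pathWeight_append_singleton (w : V → V → ℕ) {Q : List V} {y : V} (hy : Q.getLast? = some y)
    (u : V) : pathWeight w (Q ++ [u]) = pathWeight w Q + w y u := by
  induction Q with
  | nil => simp at hy
  | cons a l ih =>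
    cases l with
    | nil => simp_all [pathWeight]
    | cons b m =>
      have := ih (by simpa using hy)
      simp only [pathWeight, List.cons_append, List.tail_cons, List.zipWith_cons_cons,
        List.sum_cons] at this ⊢
      omega

variable [DecidableEq V] {Y : Finset V} {v u y : V} {P Q : List V}

lemma mem_hamPaths_iff :
    P ∈ hamPaths Y v u ↔ P.Nodup ∧ P.toFinset = Y ∧ P.head? = some v ∧ P.getLast? = some u := by
  simp only [hamPaths, Finset.mem_filter, List.mem_toFinset, List.mem_permutations]
  constructor
  · rintro ⟨hp, h1, h2⟩
    exact ⟨hp.nodup_iff.mpr Y.nodup_toList,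
      by rw [List.toFinset_eq_of_perm _ _ hp, Y.toList_toFinset], h1, h2⟩
  · rintro ⟨hnd, hfs, h1, h2⟩
    refine ⟨List.perm_of_nodup_nodup_toFinset_eq hnd Y.nodup_toList ?_, h1, h2⟩
    rw [hfs, Y.toList_toFinset]

lemma mem_of_mem_hamPaths_right (hP : P ∈ hamPaths Y v u) : u ∈ Y := by
  obtain ⟨-, rfl, -, hu⟩ := mem_hamPaths_iff.mp hP
  exact List.mem_toFinset.mpr (List.mem_of_getLast? hu)

lemma append_singleton_mem_hamPaths_s8 (hQ : Q ∈ hamPaths (Y \ {u}) v y) (hu : u ∈ Y) :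
    Q ++ [u] ∈ hamPaths Y v u := by
  obtain ⟨hnd, hQY, hv, hy⟩ := mem_hamPaths_iff.mp hQ
  have hQne : Q ≠ [] := by rintro rfl; simp at hv
  have huQ : u ∉ Q := fun h ↦ by simpa [hQY] using List.mem_toFinset.mpr h
  refine mem_hamPaths_iff.mpr
    ⟨?_, ?_, by rwa [List.head?_append_of_ne_nil _ hQne], List.getLast?_concat⟩
  · exact List.nodup_append.mpr ⟨hnd, List.nodup_singleton u, by grind⟩
  · rw [List.toFinset_append, hQY]
    simp [hu]

lemma exists_eq_append_singleton_of_mem_hamPaths (hP : P ∈ hamPaths Y v u) (hvu : v ≠ u) :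
    ∃ y, ∃ Q ∈ hamPaths (Y \ {u}) v y, P = Q ++ [u] := by
  obtain ⟨hnd, rfl, hv, hu⟩ := mem_hamPaths_iff.mp hP
  obtain ⟨Q, rfl⟩ : ∃ Q, P = Q ++ [u] := ⟨P.dropLast, (List.dropLast_append_getLast? u hu).symm⟩
  obtain ⟨hQnd, -, huQ⟩ := List.nodup_append.mp hnd
  obtain ⟨y, hy⟩ : ∃ y, Q.getLast? = some y := by
    refine Option.ne_none_iff_exists'.mp fun h ↦ hvu ?_
    simp_all
  refine ⟨y, Q, mem_hamPaths_iff.mpr ⟨hQnd, ?_, ?_, hy⟩, rfl⟩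
  · ext x
    simp only [List.toFinset_append, Finset.mem_sdiff, Finset.mem_union, List.mem_toFinset]
    grind
  · rwa [List.head?_append_of_ne_nil _ (by rintro rfl; simp at hy)] at hv

lemma hamPaths_eq_biUnion (hu : u ∈ Y) (hvu : v ≠ u) :
    hamPaths Y v u = (Y \ {u}).biUnion fun y ↦ (hamPaths (Y \ {u}) v y).image (· ++ [u]) := by
  ext P
  simp only [Finset.mem_biUnion, Finset.mem_image]
  constructor
  · intro hP
    obtain ⟨y, Q, hQ, rfl⟩ := exists_eq_append_singleton_of_mem_hamPaths hP hvu
    exact ⟨y, mem_of_mem_hamPaths_right hQ, Q, hQ, rfl⟩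
  · rintro ⟨y, -, Q, hQ, rfl⟩
    exact append_singleton_mem_hamPaths_s8 hQ hu

lemma Lfun_add_eq_sup_append_singleton (w : V → V → ℕ) (Y : Finset V) (v y u : V) :
    Lfun w Y v y + ((w y u : ℕ) : WithBot ℕ) =
      (hamPaths Y v y).sup fun Q ↦ ((pathWeight w (Q ++ [u]) : ℕ) : WithBot ℕ) := by
  rw [Lfun, Finset.apply_sup_eq_sup_comp_of_linearOrder (· + ((w y u : ℕ) : WithBot ℕ))
    (fun _ _ h ↦ add_le_add_left h _) (WithBot.bot_add _)]
  refine Finset.sup_congr rfl fun Q hQ ↦ ?_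
  rw [pathWeight_append_singleton w (mem_hamPaths_iff.mp hQ).2.2.2]
  simp

end HamiltonianPaths

theorem stmt8_general {V : Type*} [DecidableEq V] (w : V → V → ℕ) (Y : Finset V) (v u : V)
    (hu : u ∈ Y) (hvu : v ≠ u) :
    Lfun w Y v u =
      (Y \ {u}).sup (fun y => Lfun w (Y \ {u}) v y + ((w y u : ℕ) : WithBot ℕ)) := by
  simp only [Lfun_add_eq_sup_append_singleton]
  rw [Lfun, hamPaths_eq_biUnion hu hvu, Finset.sup_biUnion]
  simp only [Finset.sup_image, Function.comp_def]

theorem stmt8 {V : Type*} [DecidableEq V] (w : V → V → ℕ) (Y : Finset V) (v u : V)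
    (hv : v ∈ Y) (hu : u ∈ Y) (hvu : v ≠ u) :
    Lfun w Y v u =
      (Y \ {u}).sup (fun y => Lfun w (Y \ {u}) v y + ((w y u : ℕ) : WithBot ℕ)) :=
  stmt8_general w Y v u hu hvu
end

section
/- Let S = (s^1, …, s^n) be a dictionary of strings and t a text of length m, and suppose ((i_1, …, i_r), (q_1, …, q_r)) is an assembly of t from S. For each j ∈ {1, …, r}, choose an index i'_j such that s^{i'_j} occurs in t at position q_j (i.e., t[q_j, q_j + |s^{i'_j}| − 1] = s^{i'_j}) and |s^{i'_j}| is maximal among the lengths of all strings of S that occur in t at position q_j. Then ((i'_1, …, i'_r), (q_1, …, q_r)) is also an assembly of t from S. -/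
/-- The string `u` occurs in the text `t` at (0-based) position `p`. -/
def OccursAt {σ : Type*} (u t : List σ) (p : ℕ) : Prop :=
  p + u.length ≤ t.length ∧ (t.drop p).take u.length = u

/-- `(ix, q)` is an assembly of the text `t` from the dictionary `s`: positions start at the
beginning of `t`, consecutive chosen strings overlap or touch, the last chosen string ends
exactly at the end of `t`, and each chosen string occurs in `t` at its position.
(Positions are 0-based; the paper's 1-based conditions `q_1 = 1`,
`q_r = m - |s^{i_r}| + 1`, `q_j ≤ q_{j-1} + |s^{i_{j-1}}|` become the ones below.) -/
def IsAssembly {σ : Type*} {n : ℕ} (s : Fin n → List σ) (t : List σ) {r : ℕ} (hr : 0 < r)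
    (ix : Fin r → Fin n) (q : Fin r → ℕ) : Prop :=
  q ⟨0, hr⟩ = 0 ∧
  q ⟨r - 1, Nat.sub_lt hr Nat.one_pos⟩ =
      t.length - (s (ix ⟨r - 1, Nat.sub_lt hr Nat.one_pos⟩)).length ∧
  (∀ (j : ℕ) (h : j + 1 < r),
      q ⟨j + 1, h⟩ ≤ q ⟨j, Nat.lt_of_succ_lt h⟩ + (s (ix ⟨j, Nat.lt_of_succ_lt h⟩)).length) ∧
  (∀ j : Fin r, OccursAt (s (ix j)) t (q j))

theorem stmt12 {σ : Type*} {n : ℕ} (s : Fin n → List σ) (t : List σ) {r : ℕ} (hr : 0 < r)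
    (ix : Fin r → Fin n) (q : Fin r → ℕ) (h : IsAssembly s t hr ix q)
    (ix' : Fin r → Fin n)
    (hocc : ∀ j : Fin r, OccursAt (s (ix' j)) t (q j))
    (hmax : ∀ (j : Fin r) (i : Fin n),
      OccursAt (s i) t (q j) → (s i).length ≤ (s (ix' j)).length) :
    IsAssembly s t hr ix' q := by
  obtain ⟨h0, hlast, hchain, hoccs⟩ := h
  refine ⟨h0, ?_, ?_, hocc⟩
  · set jl : Fin r := ⟨r - 1, Nat.sub_lt hr Nat.one_pos⟩
    have hle : (s (ix jl)).length ≤ (s (ix' jl)).length := hmax jl _ (hoccs jl)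
    have h1 := (hocc jl).1
    have h2 := (hoccs jl).1
    omega
  · intro j hj
    calc q ⟨j + 1, hj⟩ ≤ q ⟨j, Nat.lt_of_succ_lt hj⟩ + (s (ix ⟨j, Nat.lt_of_succ_lt hj⟩)).length := hchain j hj
      _ ≤ _ := by
        have := hmax ⟨j, Nat.lt_of_succ_lt hj⟩ _ (hoccs ⟨j, Nat.lt_of_succ_lt hj⟩)
        omega
end
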